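/- arXiv:2012.15491 — 5 statements merged into one kernel-verified Lean document; each statement's English description precedes it below -/
import Mathlib

section
/- Let G be a group, H a nonzero complex Hilbert space, and U : G → B(H) a family of unitary operators projective with multiplier ν. Let S be a set of bounded operators on H with trivial commutant, and let ι : G → B(H) assign to each g a unitary operator such that ι(g) ∘ ι(h) = ι(g·h) for all g, h ∈ G and such that ι(g) ∘ A ∘ ι(g)⁻¹ = U(g) ∘ A ∘ U(g)⁻¹ for all A ∈ S and all g ∈ G. Then there exists μ : G → ℂ with |μ(g)| = 1 such that U(g) = μ(g) • ι(g) for all g, and ν(g,h) = μ(g)·μ(h)·μ(g·h)⁻¹ for all g, h ∈ G; in particular ν is a coboundary. -/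
/-!
Both `ι g` and `U g` implement the same automorphism `A ↦ u A u*` of `S`, so the unitary
`(ι g)* U g` commutes with `S` and is therefore a scalar `μ g`, necessarily of modulus one.
Comparing `U g U h = μ g μ h ι (g h)` with `ν g h U (g h) = ν g h μ (g h) ι (g h)` gives the
coboundary formula, since `ι (g h)` is a nonzero vector of a vector space.
-/

namespace Unitary

variable {R : Type*} [Monoid R] [StarMul R]

theorem commute_star_mul_of_conj_eq {u v a : R} (hu : u ∈ unitary R) (hv : v ∈ unitary R)
    (h : u * a * star u = v * a * star v) : Commute (star u * v) a :=
  calc star u * v * a = star u * (v * a * star v) * v := by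
        simp only [mul_assoc, star_mul_self_of_mem hv, mul_one]
    _ = star u * (u * a * star u) * v := by rw [h]
    _ = a * (star u * v) := by
        simp only [← mul_assoc, star_mul_self_of_mem hu, one_mul]

end Unitary

theorem eq_smul_of_star_mul_eq_smul_one {𝕜 A : Type*} [CommSemiring 𝕜] [Semiring A] [StarMul A]
    [Algebra 𝕜 A] {u v : A} (hu : u ∈ unitary A) {c : 𝕜}
    (h : star u * v = c • 1) : v = c • u :=
  calc v = u * (star u * v) := by rw [← mul_assoc, Unitary.mul_star_self_of_mem hu, one_mul]
    _ = c • u := by rw [h, mul_smul_comm, mul_one]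

theorem mem_unitary_of_smul_mem_unitary {𝕜 A : Type*} [Field 𝕜] [StarRing 𝕜] [Ring A]
    [StarRing A] [Algebra 𝕜 A] [StarModule 𝕜 A] [Nontrivial A] {u : A} {c : 𝕜}
    (hu : u ∈ unitary A) (hcu : c • u ∈ unitary A) : c ∈ unitary 𝕜 := by
  have hc : (star c * c) • (1 : A) = (1 : 𝕜) • 1 :=
    calc (star c * c) • (1 : A) = (star c * c) • (star u * u) := by
          rw [Unitary.star_mul_self_of_mem hu]
      _ = star (c • u) * (c • u) := by rw [star_smul, smul_mul_smul_comm]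
      _ = (1 : 𝕜) • 1 := by rw [Unitary.star_mul_self_of_mem hcu, one_smul]
  exact Unitary.mem_iff_star_mul_self.mpr (smul_left_injective 𝕜 one_ne_zero hc)

theorem multiplier_eq_of_eq_smul_of_map_mul {G 𝕜 A : Type*} [Mul G] [Field 𝕜] [Ring A]
    [Algebra 𝕜 A] {U ι : G → A} {μ : G → 𝕜}
    {ν : G → G → 𝕜} (hUμ : ∀ g, U g = μ g • ι g) (hι : ∀ g h, ι g * ι h = ι (g * h))
    (hproj : ∀ g h, U g * U h = ν g h • U (g * h)) {g h : G} (hμ : μ (g * h) ≠ 0)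
    (hι0 : ι (g * h) ≠ 0) : ν g h = μ g * μ h * (μ (g * h))⁻¹ := by
  have hsmul : (ν g h * μ (g * h)) • ι (g * h) = (μ g * μ h) • ι (g * h) := by
    rw [← smul_smul, ← hUμ, ← hproj, hUμ, hUμ, smul_mul_smul_comm, hι]
  rw [← smul_left_injective 𝕜 hι0 hsmul, mul_inv_cancel_right₀ hμ]

/-- If a projective family of unitaries `U` with multiplier `ν` implements the same
conjugation on a set `S` with trivial commutant as a genuine unitary representation `ι`,
then `U g = μ g • ι g` for phases `μ` and `ν` is the coboundary of `μ`. -/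
theorem projective_multiplier_is_coboundary_of_genuine_implementation
    {G : Type*} [Group G] {H : Type*} [NormedAddCommGroup H]
    [InnerProductSpace ℂ H] [CompleteSpace H] [Nontrivial H]
    (U : G → (H →L[ℂ] H)) (hU : ∀ g, U g ∈ unitary (H →L[ℂ] H))
    (ν : G → G → ℂ)
    (hproj : ∀ g h, U g * U h = ν g h • U (g * h))
    (S : Set (H →L[ℂ] H))
    (hS : ∀ T : H →L[ℂ] H, (∀ A ∈ S, T * A = A * T) → ∃ c : ℂ, T = c • (1 : H →L[ℂ] H))
    (ι : G → (H →L[ℂ] H)) (hι : ∀ g, ι g ∈ unitary (H →L[ℂ] H))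
    (hιrep : ∀ g h, ι g * ι h = ι (g * h))
    (hconj : ∀ g, ∀ A ∈ S, ι g * A * star (ι g) = U g * A * star (U g)) :
    ∃ μ : G → ℂ, (∀ g, ‖μ g‖ = 1) ∧ (∀ g, U g = μ g • ι g) ∧
      ∀ g h, ν g h = μ g * μ h * (μ (g * h))⁻¹ := by
  choose μ hμ using fun g ↦ hS (star (ι g) * U g) fun A hA ↦
    (Unitary.commute_star_mul_of_conj_eq (hι g) (hU g) (hconj g A hA)).eq
  have hUμ : ∀ g, U g = μ g • ι g := fun g ↦ eq_smul_of_star_mul_eq_smul_one (hι g) (hμ g)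
  have hμ_norm : ∀ g, ‖μ g‖ = 1 := fun g ↦
    CStarRing.norm_of_mem_unitary (mem_unitary_of_smul_mem_unitary (hι g) (hUμ g ▸ hU g))
  have hι_norm : ∀ g, ‖ι g‖ = 1 := fun g ↦ CStarRing.norm_of_mem_unitary (hι g)
  refine ⟨μ, hμ_norm, hUμ, fun g h ↦ multiplier_eq_of_eq_smul_of_map_mul hUμ hιrep hproj ?_ ?_⟩
  · exact norm_ne_zero_iff.mp (by simp [hμ_norm])
  · exact norm_ne_zero_iff.mp (by simp [hι_norm])
end

section
/- Let G be a finite group and V a finite-dimensional complex representation of G which is faithful and contains a nonzero G-invariant vector. Then for every irreducible finite-dimensional complex representation W of G there exists L₀ ∈ ℕ such that for all L ≥ L₀ the space Hom_G(W, V^{⊗L}) of G-equivariant linear maps is nonzero, i.e. d(L) := dim_ℂ Hom_G(W, V^{⊗L}) > 0. -/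
open scoped TensorProduct

/-- The space `Hom_G(W, V^{⊗L})` of `G`-equivariant linear maps from `W` to the `L`-fold
tensor power of `V` (with the diagonal `G`-action). -/
noncomputable def equivariantHom {G V W : Type*} [Group G]
    [AddCommGroup V] [Module ℂ V] [AddCommGroup W] [Module ℂ W]
    (ρV : Representation ℂ G V) (ρW : Representation ℂ G W) (L : ℕ) :
    Submodule ℂ (W →ₗ[ℂ] (⨂[ℂ] _ : Fin L, V)) where
  carrier := { f | ∀ g : G,
    (PiTensorProduct.map fun _ : Fin L => ρV g) ∘ₗ f = f ∘ₗ ρW g }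
  add_mem' := by
    intro f f' hf hf' g
    rw [LinearMap.comp_add, LinearMap.add_comp, hf g, hf' g]
  zero_mem' := by
    intro g
    rw [LinearMap.comp_zero, LinearMap.zero_comp]
  smul_mem' := by
    intro c f hf g
    rw [LinearMap.comp_smul, LinearMap.smul_comp, hf g]

/-!
For `g ≠ 1` the operator `ρV g` has finite order, fixes a nonzero vector and is not the identity,
so its eigenvalues are roots of unity, one of them is `1` and (by semisimplicity) not all of them
are; strict convexity of `ℂ` then gives `‖χ_V(g)‖ < dim V = χ_V(1)`. By the character formula,
`|G| · dim Hom_G(W, V^{⊗L}) = ∑_g χ_W(g⁻¹) χ_V(g)^L`, in which the term of `g = 1`,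
`dim W · (dim V)^L`, dominates all others for large `L`.
-/

open Filter Module Polynomial

theorem LinearMap.trace_piTensorProduct {R ι : Type*} [CommRing R] [Fintype ι]
    {M : ι → Type*} [∀ i, AddCommGroup (M i)] [∀ i, Module R (M i)]
    [∀ i, Module.Free R (M i)] [∀ i, Module.Finite R (M i)] (f : Π i, M i →ₗ[R] M i) :
    trace R _ (PiTensorProduct.map f) = ∏ i, trace R (M i) (f i) := by
  classical
  let b := fun i => Module.Free.chooseBasis R (M i)
  rw [trace_eq_matrix_trace R (Basis.piTensorProduct b)]
  simp_rw [fun i => trace_eq_matrix_trace R (b i) (f i), Matrix.trace, Finset.prod_univ_sum]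
  simp [LinearMap.toMatrix_apply]

theorem Multiset.norm_sum_lt_card {E : Type*} [NormedAddCommGroup E] [NormedSpace ℝ E]
    [StrictConvexSpace ℝ E] {s : Multiset E} (hs : ∀ z ∈ s, ‖z‖ = 1) {a b : E} (ha : a ∈ s)
    (hb : b ∈ s) (hab : a ≠ b) : ‖s.sum‖ < card s := by
  classical
  obtain ⟨t, rfl⟩ : ∃ t, s = a ::ₘ b ::ₘ t :=
    ⟨(s.erase a).erase b, by rw [Multiset.cons_erase (Multiset.mem_erase_of_ne hab.symm |>.2 hb),
      Multiset.cons_erase ha]⟩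
  have hnorm_a : ‖a‖ = 1 := hs a (by simp)
  have hnorm_b : ‖b‖ = 1 := hs b (by simp)
  have hab_lt : ‖a + b‖ < 2 := by
    have : ¬SameRay ℝ a b := fun h => hab (h.eq_of_norm_eq (hnorm_a.trans hnorm_b.symm))
    linarith [norm_add_lt_of_not_sameRay this]
  have ht : ‖t.sum‖ ≤ card t := by
    refine (norm_multiset_sum_le t).trans ?_
    rw [Multiset.map_congr rfl fun z hz => hs z (by simp [hz]), Multiset.map_const',
      Multiset.sum_replicate, nsmul_one]
  calc ‖(a ::ₘ b ::ₘ t).sum‖ = ‖(a + b) + t.sum‖ := by simp [add_assoc]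
    _ ≤ ‖a + b‖ + ‖t.sum‖ := norm_add_le _ _
    _ < 2 + card t := by linarith
    _ = card (a ::ₘ b ::ₘ t) := by simp only [Multiset.card_cons]; push_cast; ring

namespace Module.End

variable {K V : Type*} [Field K] [AddCommGroup V] [Module K V]

theorem isSemisimple_of_isOfFinOrder [CharZero K] {f : End K V} (hf : IsOfFinOrder f) :
    f.IsSemisimple := by
  obtain ⟨k, hk, hfk⟩ := hf.exists_pow_eq_one
  refine isSemisimple_of_squarefree_aeval_eq_zero
    (X_pow_sub_one_separable_iff.2 (by exact_mod_cast hk.ne')).squarefree ?_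
  simp [hfk]

theorem HasEigenvalue.pow_eq_one {f : End K V} {μ : K} (hμ : f.HasEigenvalue μ) {k : ℕ}
    (hfk : f ^ k = 1) : μ ^ k = 1 := by
  obtain ⟨v, hv⟩ := hμ.exists_hasEigenvector
  have h := hv.pow_apply k
  rw [hfk, one_apply] at h
  exact smul_left_injective K hv.2 (h.symm.trans (one_smul K v).symm)

theorem IsSemisimple.eq_algebraMap_of_forall_hasEigenvalue [IsAlgClosed K]
    [FiniteDimensional K V] {f : End K V} (hf : f.IsSemisimple) {c : K}
    (h : ∀ μ, f.HasEigenvalue μ → μ = c) : f = algebraMap K (End K V) c := by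
  have htop : f.eigenspace c = ⊤ := by
    refine top_le_iff.1 (hf.iSup_eigenspace_eq_top ▸ iSup_le fun μ => ?_)
    by_cases hμ : f.HasEigenvalue μ
    · rw [h μ hμ]
    · rw [hasEigenvalue_iff, not_not] at hμ
      simp [hμ]
  ext v
  simpa using mem_eigenspace_iff.1 (htop ▸ Submodule.mem_top : v ∈ f.eigenspace c)

end Module.End

theorem Module.End.norm_trace_lt_finrank {V : Type*} [AddCommGroup V] [Module ℂ V]
    [FiniteDimensional ℂ V] {f : End ℂ V} (hf : IsOfFinOrder f) (h1 : f.HasEigenvalue 1)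
    (hne : f ≠ 1) : ‖LinearMap.trace ℂ V f‖ < finrank ℂ V := by
  obtain ⟨k, hk, hfk⟩ := hf.exists_pow_eq_one
  have hroots : ∀ μ, μ ∈ f.charpoly.roots ↔ f.HasEigenvalue μ := fun μ => by
    rw [mem_roots f.charpoly_monic.ne_zero, hasEigenvalue_iff_isRoot_charpoly]
  have hsplits : f.charpoly.Splits := IsAlgClosed.splits _
  have hcard : Multiset.card f.charpoly.roots = finrank ℂ V := by
    rw [← hsplits.natDegree_eq_card_roots, LinearMap.charpoly_natDegree]
  obtain ⟨μ, hμ, hμ1⟩ : ∃ μ, f.HasEigenvalue μ ∧ μ ≠ 1 := by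
    by_contra! h
    exact hne <| ((isSemisimple_of_isOfFinOrder hf).eq_algebraMap_of_forall_hasEigenvalue h).trans
      (map_one _)
  rw [trace_eq_sum_roots_charpoly_of_splits hsplits, ← hcard]
  exact Multiset.norm_sum_lt_card
    (fun z hz => Complex.norm_eq_one_of_pow_eq_one (((hroots z).1 hz).pow_eq_one hfk) hk.ne')
    ((hroots μ).2 hμ) ((hroots 1).2 h1) hμ1

theorem eventually_sum_mul_pow_ne_zero {𝕜 ι : Type*} [NormedField 𝕜] [Fintype ι]
    (a z : ι → 𝕜) {i₀ : ι} (ha : a i₀ ≠ 0) (hz : z i₀ ≠ 0) (hlt : ∀ i ≠ i₀, ‖z i‖ < ‖z i₀‖) :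
    ∀ᶠ L in atTop, ∑ i, a i * z i ^ L ≠ 0 := by
  classical
  have hlim : Tendsto (fun L => ∑ i, a i * (z i / z i₀) ^ L) atTop
      (nhds (∑ i, if i = i₀ then a i else 0)) := by
    refine tendsto_finsetSum _ fun i _ => ?_
    split_ifs with hi
    · subst hi
      simp [div_self hz]
    · have hq : ‖z i / z i₀‖ < 1 := by
        rw [norm_div, div_lt_one (norm_pos_iff.2 hz)]
        exact hlt i hi
      simpa using (tendsto_pow_atTop_nhds_zero_of_norm_lt_one hq).const_mul (a i)
  rw [Finset.sum_ite_eq' Finset.univ i₀ a, if_pos (Finset.mem_univ _)] at hlim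
  filter_upwards [hlim.eventually_ne ha] with L hL
  have : ∑ i, a i * z i ^ L = z i₀ ^ L * ∑ i, a i * (z i / z i₀) ^ L := by
    rw [Finset.mul_sum]
    refine Finset.sum_congr rfl fun i _ => ?_
    rw [mul_left_comm, ← mul_pow, mul_div_cancel₀ _ hz]
  rw [this]
  exact mul_ne_zero (pow_ne_zero L hz) hL

namespace Representation

section

variable {k G V : Type*} [CommSemiring k] [Monoid G] [AddCommMonoid V] [Module k V]

noncomputable def tensorPower (ρ : Representation k G V) (L : ℕ) :
    Representation k G (⨂[k] _ : Fin L, V) :=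
  PiTensorProduct.mapMonoidHom.comp ((Pi.constMonoidHom (Fin L) _).comp ρ)

theorem tensorPower_apply (ρ : Representation k G V) (L : ℕ) (g : G) :
    ρ.tensorPower L g = PiTensorProduct.map fun _ => ρ g :=
  rfl

end

theorem character_tensorPower {k G V : Type*} [Field k] [Monoid G]
    [AddCommGroup V] [Module k V] [FiniteDimensional k V] (ρ : Representation k G V) (L : ℕ)
    (g : G) : (ρ.tensorPower L).character g = ρ.character g ^ L := by
  simp [character, tensorPower_apply, LinearMap.trace_piTensorProduct]

theorem norm_character_lt_finrank {G V : Type*} [Group G] [Finite G]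
    [AddCommGroup V] [Module ℂ V] [FiniteDimensional ℂ V] {ρ : Representation ℂ G V}
    (hρ : Function.Injective ρ) {v : V} (hv : v ≠ 0) (hvinv : ∀ g, ρ g v = v) {g : G}
    (hg : g ≠ 1) : ‖ρ.character g‖ < finrank ℂ V :=
  Module.End.norm_trace_lt_finrank (ρ.isOfFinOrder (isOfFinOrder_of_finite g))
    (Module.End.hasEigenvalue_of_hasEigenvector ⟨by simp [hvinv], hv⟩)
    (fun h => hg (hρ (h.trans (map_one ρ).symm)))

end Representation

def equivariantHomEquivIntertwiningMap {G V W : Type*} [Group G]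
    [AddCommGroup V] [Module ℂ V] [AddCommGroup W] [Module ℂ W]
    (ρV : Representation ℂ G V) (ρW : Representation ℂ G W) (L : ℕ) :
    equivariantHom ρV ρW L ≃ₗ[ℂ] Representation.IntertwiningMap ρW (ρV.tensorPower L) where
  toFun f := ⟨f.1, fun g => (f.2 g).symm⟩
  invFun f := ⟨f.toLinearMap, fun g => (f.isIntertwining' g).symm⟩
  map_add' _ _ := rfl
  map_smul' _ _ := rfl
  left_inv _ := rfl
  right_inv _ := rfl

theorem equivariantHom_tensorPower_eventually_pos_general
    {G V W : Type*} [Group G] [Finite G]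
    [AddCommGroup V] [Module ℂ V] [FiniteDimensional ℂ V]
    [AddCommGroup W] [Module ℂ W] [FiniteDimensional ℂ W]
    (ρV : Representation ℂ G V) (ρW : Representation ℂ G W)
    (hfaithful : Function.Injective ρV)
    (hinv : ∃ v : V, v ≠ 0 ∧ ∀ g : G, ρV g v = v)
    (hWnz : Nontrivial W) :
    ∃ L₀ : ℕ, ∀ L ≥ L₀, 0 < Module.finrank ℂ (equivariantHom ρV ρW L) := by
  have := Fintype.ofFinite G
  have : Invertible (Nat.card G : ℂ) := invertibleOfNonzero (by simp)
  obtain ⟨v, hv, hvinv⟩ := hinv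
  have : Nontrivial V := nontrivial_of_ne v 0 hv
  have hsum := eventually_sum_mul_pow_ne_zero (fun g => ρW.character g⁻¹) ρV.character
    (i₀ := 1) (by simp [Module.finrank_pos.ne']) (by simp [Module.finrank_pos.ne'])
    fun g hg => by simpa using Representation.norm_character_lt_finrank hfaithful hv hvinv hg
  obtain ⟨L₀, hL₀⟩ := eventually_atTop.1 hsum
  refine ⟨L₀, fun L hL => Nat.pos_of_ne_zero fun h => hL₀ L hL ?_⟩
  have hchar := Representation.card_inv_mul_sum_char_mul_char_eq_finrank ρW (ρV.tensorPower L)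
  rw [← (equivariantHomEquivIntertwiningMap ρV ρW L).finrank_eq, h] at hchar
  simpa [Representation.character_tensorPower, mul_comm] using hchar

/-- If `V` is a faithful finite-dimensional complex representation of a finite group `G`
containing a nonzero invariant vector, then for every irreducible finite-dimensional
complex representation `W` of `G` the dimension `d(L) = dim Hom_G(W, V^{⊗L})` is positive
for all sufficiently large `L`. -/
theorem equivariantHom_tensorPower_eventually_pos
    {G V W : Type*} [Group G] [Finite G]
    [AddCommGroup V] [Module ℂ V] [FiniteDimensional ℂ V]
    [AddCommGroup W] [Module ℂ W] [FiniteDimensional ℂ W]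
    (ρV : Representation ℂ G V) (ρW : Representation ℂ G W)
    (hfaithful : Function.Injective ρV)
    (hinv : ∃ v : V, v ≠ 0 ∧ ∀ g : G, ρV g v = v)
    (hWnz : Nontrivial W)
    (hWirr : ∀ p : Submodule ℂ W, (∀ (g : G), ∀ w ∈ p, ρW g w ∈ p) → p = ⊥ ∨ p = ⊤) :
    ∃ L₀ : ℕ, ∀ L ≥ L₀, 0 < Module.finrank ℂ (equivariantHom ρV ρW L) :=
  equivariantHom_tensorPower_eventually_pos_general ρV ρW hfaithful hinv hWnz
end

section
/- Let H be a complex Hilbert space, let x and y be unit vectors in H, and suppose the inner product ⟨x, y⟩ is a real number satisfying ⟨x, y⟩ ≥ 1 − ε for some ε with 0 ≤ ε ≤ 1. Then there exists a unitary operator U on H such that U x = y, U z = z for every vector z orthogonal to both x and y, and ‖1 − U‖ ≤ √(2ε). -/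
/-!
Take `U = R_{x+y} ∘ R_x`, where `R_v` is the reflection in the line `𝕜 ∙ v`. As `‖x‖ = ‖y‖` and
`⟪x, y⟫` is real, `x + y ⊥ x - y`, so `R_{x+y}` swaps `x` and `y`; both reflections act as `-1` on
`{x, y}ᗮ`, so `U` fixes it. On the plane `span {x, y}`, `U` is the rotation by the angle whose
cosine is `t = ⟪x, y⟫`, whence `‖v - U v‖² = 2 (1 - t) ‖v‖²` there. Since `1 - U` vanishes on the
orthogonal complement of that plane, `‖1 - U‖ ≤ √(2 (1 - t)) ≤ √(2 ε)`.
-/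

open scoped InnerProductSpace ComplexConjugate

section

open Submodule RCLike

variable {𝕜 E : Type*} [RCLike 𝕜] [NormedAddCommGroup E] [InnerProductSpace 𝕜 E]

theorem ContinuousLinearMap.opNorm_le_of_orthogonal_eq_zero {F : Type*}
    [SeminormedAddCommGroup F] [NormedSpace 𝕜 F] (T : E →L[𝕜] F) (K : Submodule 𝕜 E)
    [K.HasOrthogonalProjection] {C : ℝ} (hC : 0 ≤ C) (h_orth : ∀ v ∈ Kᗮ, T v = 0)
    (hK : ∀ v ∈ K, ‖T v‖ ≤ C * ‖v‖) : ‖T‖ ≤ C := by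
  refine T.opNorm_le_bound hC fun z ↦ ?_
  have hTz : T z = T (K.starProjection z) := by
    rw [← sub_eq_zero, ← map_sub]
    exact h_orth _ (K.sub_starProjection_mem_orthogonal z)
  calc ‖T z‖ = ‖T (K.starProjection z)‖ := by rw [hTz]
    _ ≤ C * ‖K.starProjection z‖ := hK _ (K.starProjection_apply_mem z)
    _ ≤ C * ‖z‖ := by gcongr; exact K.norm_starProjection_apply_le z

theorem inner_symm_of_eq_ofReal {x y : E} {t : ℝ} (h : ⟪x, y⟫_𝕜 = t) :
    ⟪y, x⟫_𝕜 = ⟪x, y⟫_𝕜 := by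
  rw [← inner_conj_symm, h, conj_ofReal]

theorem reflection_span_add_apply_left {x y : E} (hnorm : ‖x‖ = ‖y‖)
    (hreal : ⟪y, x⟫_𝕜 = ⟪x, y⟫_𝕜) : (𝕜 ∙ (x + y)).reflection x = y := by
  have horth : x - y ∈ (𝕜 ∙ (x + y))ᗮ := by
    rw [mem_orthogonal_singleton_iff_inner_right, inner_add_left, inner_sub_right,
      inner_sub_right, hreal, inner_self_eq_norm_sq_to_K, inner_self_eq_norm_sq_to_K, hnorm]
    ring
  calc (𝕜 ∙ (x + y)).reflection x
      = (𝕜 ∙ (x + y)).reflection ((2⁻¹ : 𝕜) • (x + y) + (2⁻¹ : 𝕜) • (x - y)) := by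
        congr 1; module
    _ = y := by
      rw [map_add, map_smul, map_smul, reflection_mem_subspace_eq_self (mem_span_singleton_self _),
        reflection_mem_subspace_orthogonalComplement_eq_neg horth]
      module

variable (𝕜) in
noncomputable def planeRotation (x y : E) : E ≃ₗᵢ[𝕜] E :=
  (𝕜 ∙ x).reflection.trans (𝕜 ∙ (x + y)).reflection

section planeRotation

variable {x y : E}

theorem planeRotation_apply_left (hnorm : ‖x‖ = ‖y‖) (hreal : ⟪y, x⟫_𝕜 = ⟪x, y⟫_𝕜) :
    planeRotation 𝕜 x y x = y := by
  simp only [planeRotation, LinearIsometryEquiv.trans_apply,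
    reflection_mem_subspace_eq_self (mem_span_singleton_self x)]
  exact reflection_span_add_apply_left hnorm hreal

theorem planeRotation_apply_of_inner_eq_zero {z : E} (hxz : ⟪x, z⟫_𝕜 = 0) (hyz : ⟪y, z⟫_𝕜 = 0) :
    planeRotation 𝕜 x y z = z := by
  have hwz : ⟪x + y, z⟫_𝕜 = 0 := by rw [inner_add_left, hxz, hyz, add_zero]
  simp only [planeRotation, LinearIsometryEquiv.trans_apply,
    reflection_mem_subspace_orthogonalComplement_eq_neg
      (mem_orthogonal_singleton_iff_inner_right.2 hxz), map_neg,
    reflection_mem_subspace_orthogonalComplement_eq_neg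
      (mem_orthogonal_singleton_iff_inner_right.2 hwz), neg_neg]

variable {t : ℝ} (hx : ‖x‖ = 1) (hy : ‖y‖ = 1) (hxy : ⟪x, y⟫_𝕜 = t)
include hx hy hxy

theorem planeRotation_apply_right : planeRotation 𝕜 x y y = (2 * t : 𝕜) • y - x := by
  have hyx := inner_symm_of_eq_ofReal hxy
  have hswap : (𝕜 ∙ (x + y)).reflection y = x := by
    rw [add_comm]; exact reflection_span_add_apply_left (hx.trans hy.symm).symm hyx.symm
  simp only [planeRotation, LinearIsometryEquiv.trans_apply, reflection_singleton_apply, hx, hxy,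
    map_sub, map_smul, map_nsmul, reflection_span_add_apply_left (hx.trans hy.symm) hyx, hswap]
  module

theorem norm_smul_add_smul_sq (a b : 𝕜) :
    ‖a • x + b • y‖ ^ 2 = ‖a‖ ^ 2 + ‖b‖ ^ 2 + 2 * t * re (conj a * b) := by
  rw [@norm_add_sq 𝕜, norm_smul, norm_smul, hx, hy, inner_smul_left, inner_smul_right, hxy,
    ← mul_assoc, re_mul_ofReal]
  ring

theorem norm_sub_planeRotation_sq (a b : 𝕜) :
    ‖a • x + b • y - planeRotation 𝕜 x y (a • x + b • y)‖ ^ 2 =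
      2 * (1 - t) * ‖a • x + b • y‖ ^ 2 := by
  have hsub : a • x + b • y - planeRotation 𝕜 x y (a • x + b • y) =
      (a + b) • x + ((1 - 2 * t) * b - a) • y := by
    rw [map_add, map_smul, map_smul,
      planeRotation_apply_left (hx.trans hy.symm) (inner_symm_of_eq_ofReal hxy),
      planeRotation_apply_right hx hy hxy]
    module
  rw [hsub, norm_smul_add_smul_sq hx hy hxy, norm_smul_add_smul_sq hx hy hxy]
  simp only [RCLike.norm_sq_eq_def, map_add, map_sub, mul_re, mul_im, conj_re, conj_im, ofReal_re,
    ofReal_im, ofNat_re, ofNat_im, one_re, one_im]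
  ring

theorem norm_one_sub_planeRotation_le :
    ‖(1 : E →L[𝕜] E) - ((planeRotation 𝕜 x y).toContinuousLinearEquiv : E →L[𝕜] E)‖ ≤
      √(2 * (1 - t)) := by
  have : FiniteDimensional 𝕜 (span 𝕜 {x, y}) := .span_of_finite 𝕜 (Set.toFinite _)
  refine ContinuousLinearMap.opNorm_le_of_orthogonal_eq_zero _ (span 𝕜 {x, y})
    (Real.sqrt_nonneg _) (fun z hz ↦ ?_) (fun v hv ↦ ?_)
  · have hinner (u : E) (hu : u ∈ ({x, y} : Set E)) : ⟪u, z⟫_𝕜 = 0 :=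
      (mem_orthogonal _ z).1 hz u (subset_span hu)
    exact sub_eq_zero.2 (planeRotation_apply_of_inner_eq_zero (hinner x (by simp))
      (hinner y (by simp))).symm
  · obtain ⟨a, b, rfl⟩ := mem_span_pair.1 hv
    rw [← Real.sqrt_sq (norm_nonneg _), ← Real.sqrt_sq (norm_nonneg (a • x + b • y)),
      ← Real.sqrt_mul' _ (sq_nonneg _)]
    exact Real.sqrt_le_sqrt (norm_sub_planeRotation_sq hx hy hxy a b).le

end planeRotation

end

theorem exists_unitary_rotation_close_to_id_general
    {H : Type*} [NormedAddCommGroup H] [InnerProductSpace ℂ H] [CompleteSpace H]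
    (x y : H) (hx : ‖x‖ = 1) (hy : ‖y‖ = 1)
    (ε : ℝ)
    (hreal : ⟪x, y⟫_ℂ = (((⟪x, y⟫_ℂ).re : ℝ) : ℂ))
    (hge : 1 - ε ≤ (⟪x, y⟫_ℂ).re) :
    ∃ U : H →L[ℂ] H, U ∈ unitary (H →L[ℂ] H) ∧ U x = y ∧
      (∀ z : H, ⟪x, z⟫_ℂ = 0 → ⟪y, z⟫_ℂ = 0 → U z = z) ∧
      ‖(1 : H →L[ℂ] H) - U‖ ≤ Real.sqrt (2 * ε) := by
  refine ⟨_, (Unitary.linearIsometryEquiv.symm (planeRotation ℂ x y)).2,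
    planeRotation_apply_left (hx.trans hy.symm) (inner_symm_of_eq_ofReal hreal),
    fun z ↦ planeRotation_apply_of_inner_eq_zero, ?_⟩
  calc _ ≤ √(2 * (1 - (⟪x, y⟫_ℂ).re)) := norm_one_sub_planeRotation_le hx hy hreal
    _ ≤ √(2 * ε) := Real.sqrt_le_sqrt (by linarith)

/-- If `x`, `y` are unit vectors in a complex Hilbert space whose inner product is a real
number `≥ 1 - ε`, then there is a unitary taking `x` to `y`, fixing every vector orthogonal
to both, and at operator-norm distance at most `√(2ε)` from the identity. -/
theorem exists_unitary_rotation_close_to_id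
    {H : Type*} [NormedAddCommGroup H] [InnerProductSpace ℂ H] [CompleteSpace H]
    (x y : H) (hx : ‖x‖ = 1) (hy : ‖y‖ = 1)
    (ε : ℝ) (hε0 : 0 ≤ ε) (hε1 : ε ≤ 1)
    (hreal : ⟪x, y⟫_ℂ = (((⟪x, y⟫_ℂ).re : ℝ) : ℂ))
    (hge : 1 - ε ≤ (⟪x, y⟫_ℂ).re) :
    ∃ U : H →L[ℂ] H, U ∈ unitary (H →L[ℂ] H) ∧ U x = y ∧
      (∀ z : H, ⟪x, z⟫_ℂ = 0 → ⟪y, z⟫_ℂ = 0 → U z = z) ∧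
      ‖(1 : H →L[ℂ] H) - U‖ ≤ Real.sqrt (2 * ε) :=
  exists_unitary_rotation_close_to_id_general x y hx hy ε hreal hge
end

section
/- Let 𝔸 be a unital C*-algebra and A : ℝ → 𝔸 a continuous map such that A(t) is self-adjoint for every t ∈ ℝ. Let E be a solution of the ordered-exponential equation for A. Then E(t) is unitary for every t ∈ ℝ, that is, E(t)*·E(t) = 1 and E(t)·E(t)* = 1. -/
/-!
Since `A` is self-adjoint, `(E E⋆)' = i E A E⋆ - i E A E⋆ = 0`, so `E E⋆ = 1`. Then `E⋆ E` is
idempotent, hence so is `1 - E⋆ E`. A nonzero idempotent has norm at least `1`, so a continuous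
path of idempotents that vanishes somewhere on the connected line vanishes everywhere, by the
intermediate value theorem applied to its norm; thus `E⋆ E = 1` as well.
-/

open Complex

theorem isIdempotentElem_mul_of_mul_eq_one {M : Type*} [Monoid M] {a b : M} (h : b * a = 1) :
    IsIdempotentElem (a * b) := by
  rw [IsIdempotentElem, mul_assoc, ← mul_assoc b, h, one_mul]

theorem IsIdempotentElem.eq_zero_or_one_le_norm {R : Type*} [NonUnitalNormedRing R] {q : R}
    (hq : IsIdempotentElem q) : q = 0 ∨ 1 ≤ ‖q‖ := by
  rcases (norm_nonneg q).eq_or_lt with h | h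
  · exact .inl (norm_eq_zero.mp h.symm)
  · have : ‖q‖ * 1 ≤ ‖q‖ * ‖q‖ := by simpa [hq.eq] using norm_mul_le q q
    exact .inr (le_of_mul_le_mul_left this h)

theorem eq_zero_of_continuous_of_isIdempotentElem {X R : Type*} [TopologicalSpace X]
    [PreconnectedSpace X] [NonUnitalNormedRing R] {q : X → R} (hq : Continuous q)
    (hidem : ∀ x, IsIdempotentElem (q x)) {x₀ : X} (h₀ : q x₀ = 0) (x : X) : q x = 0 := by
  refine (hidem x).eq_zero_or_one_le_norm.resolve_right fun h1 => ?_
  obtain ⟨y, hy⟩ : (1 / 2 : ℝ) ∈ Set.range (‖q ·‖) :=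
    intermediate_value_univ x₀ x hq.norm ⟨by simp [h₀], by linarith⟩
  rcases (hidem y).eq_zero_or_one_le_norm with h | h
  · norm_num [h] at hy
  · linarith

section OrderedExponential

variable {𝔸 : Type*} [NormedRing 𝔸] [StarRing 𝔸] [ContinuousStar 𝔸] [NormedAlgebra ℂ 𝔸]
  [StarModule ℂ 𝔸] {A E : ℝ → 𝔸} {t : ℝ}

theorem hasDerivAt_star_of_hasDerivAt_I_smul_mul (hA : IsSelfAdjoint (A t))
    (hE : HasDerivAt E (I • (E t * A t)) t) :
    HasDerivAt (fun s => star (E s)) (-I • (A t * star (E t))) t := by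
  have h := hE.star
  rwa [star_smul, star_mul, hA.star_eq, Complex.star_def, Complex.conj_I] at h

theorem hasDerivAt_mul_star_of_hasDerivAt_I_smul_mul (hA : IsSelfAdjoint (A t))
    (hE : HasDerivAt E (I • (E t * A t)) t) :
    HasDerivAt (fun s => E s * star (E s)) 0 t := by
  have h := hE.mul (hasDerivAt_star_of_hasDerivAt_I_smul_mul hA hE)
  rwa [smul_mul_assoc, mul_smul_comm, neg_smul, ← mul_assoc, add_neg_cancel] at h

theorem mul_star_eq_one_of_hasDerivAt_I_smul_mul (hA : ∀ t, IsSelfAdjoint (A t)) (hE0 : E 0 = 1)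
    (hE : ∀ t, HasDerivAt E (I • (E t * A t)) t) (t : ℝ) : E t * star (E t) = 1 := by
  have hderiv t := hasDerivAt_mul_star_of_hasDerivAt_I_smul_mul (hA t) (hE t)
  rw [is_const_of_deriv_eq_zero (fun s => (hderiv s).differentiableAt) (fun s => (hderiv s).deriv)
    t 0, hE0, star_one, one_mul]

end OrderedExponential

theorem orderedExponential_unitary_general
    {𝔸 : Type*} [NormedRing 𝔸] [StarRing 𝔸] [CStarRing 𝔸]
    [NormedAlgebra ℂ 𝔸] [StarModule ℂ 𝔸]
    (A : ℝ → 𝔸) (hAsa : ∀ t : ℝ, IsSelfAdjoint (A t))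
    (E : ℝ → 𝔸) (hE0 : E 0 = 1)
    (hE : ∀ t : ℝ, HasDerivAt E (Complex.I • (E t * A t)) t) :
    ∀ t : ℝ, E t ∈ unitary 𝔸 := by
  have hE_mul_star := mul_star_eq_one_of_hasDerivAt_I_smul_mul hAsa hE0 hE
  have hEcont : Continuous E := continuous_iff_continuousAt.2 fun t => (hE t).continuousAt
  have hdefect : ∀ t, 1 - star (E t) * E t = 0 :=
    eq_zero_of_continuous_of_isIdempotentElem (continuous_const.sub (hEcont.star.mul hEcont))
      (fun t => (isIdempotentElem_mul_of_mul_eq_one (hE_mul_star t)).one_sub)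
      (x₀ := 0) (by simp [hE0])
  exact fun t => Unitary.mem_iff.mpr ⟨(sub_eq_zero.mp (hdefect t)).symm, hE_mul_star t⟩

/-- If `A : ℝ → 𝔸` is a continuous map into a unital C*-algebra with `A t` self-adjoint
for every `t`, and `E` solves the ordered-exponential equation for `A`, then `E t` is
unitary for every `t`. -/
theorem orderedExponential_unitary
    {𝔸 : Type*} [NormedRing 𝔸] [StarRing 𝔸] [CStarRing 𝔸]
    [NormedAlgebra ℂ 𝔸] [StarModule ℂ 𝔸] [CompleteSpace 𝔸]
    (A : ℝ → 𝔸) (hA : Continuous A) (hAsa : ∀ t : ℝ, IsSelfAdjoint (A t))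
    (E : ℝ → 𝔸) (hE0 : E 0 = 1)
    (hE : ∀ t : ℝ, HasDerivAt E (Complex.I • (E t * A t)) t) :
    ∀ t : ℝ, E t ∈ unitary 𝔸 :=
  orderedExponential_unitary_general A hAsa E hE0 hE
end

section
/- Let 𝔸 be a complex unital Banach algebra, G a group, and ρ a homomorphism from G into the group of continuous unital ℂ-algebra automorphisms of 𝔸. Let F : ℝ → 𝔸 be continuous and let E be a solution of the ordered-exponential equation for F such that E(t) is invertible for every t. For each g ∈ G define F_g : ℝ → 𝔸 by F_g(t) = ρ(g)( E(t)·( ρ(g⁻¹)(F(t)) − F(t) )·E(t)⁻¹ ), and let E_g be a solution of the ordered-exponential equation for F_g. Then for all g, h ∈ G and all t ∈ ℝ one has E_{g·h}(t) = E_g(t) · ρ(g)(E_h(t)). -/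
/-!
The twisted generator `F_g` is chosen so that `t ↦ E_g(t) · ρ(g)(E(t))` solves the same
ordered-exponential equation as `E`. For any solution `Z`, `t ↦ Z(t) · E(t)⁻¹` has zero
derivative, so `E_g = E · ρ(g)(E)⁻¹` is a coboundary, and the cocycle identity follows by algebra.
-/

theorem HasDerivAt.ringInverse {𝕜 R : Type*} [NontriviallyNormedField 𝕜] [NormedRing R]
    [NormedAlgebra 𝕜 R] [CompleteSpace R] {f : 𝕜 → R} {f' : R} {x : 𝕜}
    (hf : HasDerivAt f f' x) (hx : IsUnit (f x)) :
    HasDerivAt (fun y => Ring.inverse (f y))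
      (-(Ring.inverse (f x) * f' * Ring.inverse (f x))) x := by
  obtain ⟨u, hu⟩ := hx
  have h := (hasFDerivAt_ringInverse (𝕜 := 𝕜) u).comp_hasDerivAt_of_eq x hf hu
  rw [← hu, Ring.inverse_unit]
  exact h

theorem eq_of_hasDerivAt_mul_right {𝕜 R : Type*} [RCLike 𝕜] [NormedRing R] [NormedAlgebra 𝕜 R]
    [CompleteSpace R] {B Z W : 𝕜 → R}
    (hZ : ∀ x, HasDerivAt Z (Z x * B x) x) (hW : ∀ x, HasDerivAt W (W x * B x) x)
    (hWu : ∀ x, IsUnit (W x)) (h₀ : Z 0 = W 0) (x : 𝕜) : Z x = W x := by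
  have hderiv : ∀ y, HasDerivAt (fun y => Z y * Ring.inverse (W y)) 0 y := fun y => by
    refine ((hZ y).mul ((hW y).ringInverse (hWu y))).congr_deriv ?_
    rw [mul_neg, ← mul_assoc (Ring.inverse (W y)), Ring.inverse_mul_cancel _ (hWu y), one_mul,
      ← mul_assoc, add_neg_cancel]
  have hconst : Z x * Ring.inverse (W x) = Z 0 * Ring.inverse (W 0) :=
    is_const_of_deriv_eq_zero (fun y => (hderiv y).differentiableAt) (fun y => (hderiv y).deriv) x 0
  rw [h₀, Ring.mul_inverse_cancel _ (hWu 0)] at hconst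
  rw [← Ring.inverse_mul_cancel_right _ (Z x) (hWu x), hconst, one_mul]

theorem AlgEquiv.inverse_map_mul_map_conj_mul_map_add_map {S R : Type*} [CommSemiring S] [Ring R]
    [Algebra S R] (e : R ≃ₐ[S] R) {u : R} (hu : IsUnit u) (a : R) :
    Ring.inverse (e u) * e (u * (e.symm a - a) * Ring.inverse u) * e u + e a = a := by
  have heu : Ring.inverse (e u) * e u = 1 := Ring.inverse_mul_cancel _ (hu.map e)
  rw [map_mul, map_mul, ← mul_assoc, ← mul_assoc, heu, one_mul, mul_assoc, ← map_mul,
    Ring.inverse_mul_cancel _ hu, map_one, mul_one, ← map_add, sub_add_cancel, e.apply_symm_apply]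

section OrderedExp

variable {𝔸 𝔹 : Type*} [NormedRing 𝔸] [NormedAlgebra ℂ 𝔸] [NormedRing 𝔹] [NormedAlgebra ℂ 𝔹]

theorem HasDerivAt.map_continuousAlgEquiv {e : 𝔸 ≃ₐ[ℂ] 𝔹} (he : Continuous e) {f : ℝ → 𝔸}
    {f' : 𝔸} {t : ℝ} (hf : HasDerivAt f f' t) : HasDerivAt (fun s => e (f s)) (e f') t :=
  let L : 𝔸 →L[ℂ] 𝔹 := ⟨e.toLinearMap, he⟩
  (L.restrictScalars ℝ).hasFDerivAt.comp_hasDerivAt t hf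

def IsOrderedExp (A E : ℝ → 𝔸) : Prop :=
  E 0 = 1 ∧ ∀ t, HasDerivAt E (Complex.I • (E t * A t)) t

namespace IsOrderedExp

variable {A B X Y : ℝ → 𝔸}

theorem eq_of_isUnit [CompleteSpace 𝔸] (hX : IsOrderedExp A X) (hY : IsOrderedExp A Y)
    (hYu : ∀ t, IsUnit (Y t)) : X = Y :=
  funext <| eq_of_hasDerivAt_mul_right (B := fun t => Complex.I • A t)
    (fun t => (hX.2 t).congr_deriv (mul_smul_comm _ _ _).symm)
    (fun t => (hY.2 t).congr_deriv (mul_smul_comm _ _ _).symm) hYu (hX.1.trans hY.1.symm)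

theorem map {e : 𝔸 ≃ₐ[ℂ] 𝔹} (he : Continuous e) (hX : IsOrderedExp A X) :
    IsOrderedExp (fun t => e (A t)) (fun t => e (X t)) :=
  ⟨by simp only [hX.1, map_one], fun t => by
    simpa only [map_smul, map_mul] using (hX.2 t).map_continuousAlgEquiv he⟩

theorem mul (hX : IsOrderedExp A X) (hY : IsOrderedExp B Y) (hYu : ∀ t, IsUnit (Y t)) :
    IsOrderedExp (fun t => Ring.inverse (Y t) * A t * Y t + B t) (fun t => X t * Y t) :=
  ⟨by simp only [hX.1, hY.1, one_mul], fun t => by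
    refine ((hX.2 t).mul (hY.2 t)).congr_deriv ?_
    rw [mul_add, ← mul_assoc, ← mul_assoc, mul_assoc (X t), Ring.mul_inverse_cancel _ (hYu t),
      mul_one, smul_add, smul_mul_assoc, mul_smul_comm, ← mul_assoc, mul_assoc (X t) (A t)]⟩

end IsOrderedExp

end OrderedExp

theorem orderedExponential_cocycle_identity_general
    {𝔸 : Type*} [NormedRing 𝔸] [NormedAlgebra ℂ 𝔸] [CompleteSpace 𝔸]
    {G : Type*} [Group G]
    (ρ : G →* (𝔸 ≃ₐ[ℂ] 𝔸)) (hρ : ∀ g : G, Continuous (ρ g))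
    (F : ℝ → 𝔸)
    (E : ℝ → 𝔸) (hE0 : E 0 = 1)
    (hE : ∀ t : ℝ, HasDerivAt E (Complex.I • (E t * F t)) t)
    (hEunit : ∀ t : ℝ, IsUnit (E t))
    (Eg : G → ℝ → 𝔸) (hEg0 : ∀ g : G, Eg g 0 = 1)
    (hEg : ∀ (g : G) (t : ℝ), HasDerivAt (Eg g)
      (Complex.I • (Eg g t *
        (ρ g (E t * (ρ g⁻¹ (F t) - F t) * Ring.inverse (E t))))) t) :
    ∀ (g h : G) (t : ℝ), Eg (g * h) t = Eg g t * ρ g (Eg h t) := by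
  have hEF : IsOrderedExp F E := ⟨hE0, hE⟩
  have coboundary : ∀ g t, Eg g t * ρ g (E t) = E t := fun g t => by
    have hprod := IsOrderedExp.mul ⟨hEg0 g, hEg g⟩ (hEF.map (hρ g))
      fun t => (hEunit t).map (ρ g)
    simp only [map_inv, AlgEquiv.aut_inv,
      AlgEquiv.inverse_map_mul_map_conj_mul_map_add_map _ (hEunit _)] at hprod
    exact congrFun (hprod.eq_of_isUnit hEF hEunit) t
  intro g h t
  apply ((hEunit t).map (ρ (g * h))).mul_right_cancel
  rw [coboundary, map_mul ρ, AlgEquiv.mul_apply, mul_assoc, ← map_mul, coboundary, coboundary]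

/-- Let `ρ` be an action of a group `G` by continuous unital `ℂ`-algebra automorphisms of
a complex unital Banach algebra `𝔸`, let `E` be an invertible-valued solution of the
ordered-exponential equation for a continuous `F : ℝ → 𝔸`, and for each `g` let `E_g` be
a solution of the ordered-exponential equation for
`F_g t = ρ g (E t * (ρ g⁻¹ (F t) - F t) * (E t)⁻¹)`.  Then
`E_{g·h} t = E_g t * ρ g (E_h t)` for all `g`, `h` and `t`. -/
theorem orderedExponential_cocycle_identity
    {𝔸 : Type*} [NormedRing 𝔸] [NormedAlgebra ℂ 𝔸] [CompleteSpace 𝔸]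
    {G : Type*} [Group G]
    (ρ : G →* (𝔸 ≃ₐ[ℂ] 𝔸)) (hρ : ∀ g : G, Continuous (ρ g))
    (F : ℝ → 𝔸) (hF : Continuous F)
    (E : ℝ → 𝔸) (hE0 : E 0 = 1)
    (hE : ∀ t : ℝ, HasDerivAt E (Complex.I • (E t * F t)) t)
    (hEunit : ∀ t : ℝ, IsUnit (E t))
    (Eg : G → ℝ → 𝔸) (hEg0 : ∀ g : G, Eg g 0 = 1)
    (hEg : ∀ (g : G) (t : ℝ), HasDerivAt (Eg g)
      (Complex.I • (Eg g t *
        (ρ g (E t * (ρ g⁻¹ (F t) - F t) * Ring.inverse (E t))))) t) :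
    ∀ (g h : G) (t : ℝ), Eg (g * h) t = Eg g t * ρ g (Eg h t) :=
  orderedExponential_cocycle_identity_general ρ hρ F E hE0 hE hEunit Eg hEg0 hEg
end
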